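/- arXiv:2012.09926 — 4 statements merged into one kernel-verified Lean document; each statement's English description precedes it below -/
import Mathlib

section
/- The set of partitions of a positive integer n under the dominance order forms a lattice: any two partitions have a least upper bound and a greatest lower bound. -/
def IsPartition (n : ℕ) (a : ℕ → ℕ) : Prop :=
  (∀ i j, i ≤ j → a j ≤ a i) ∧ (∑ i ∈ Finset.range n, a i = n) ∧ (∀ i, n ≤ i → a i = 0)

def Dom (a b : ℕ → ℕ) : Prop :=
  ∀ j, ∑ i ∈ Finset.range j, a i ≤ ∑ i ∈ Finset.range j, b i

def IsSupOf (n : ℕ) (a b c : ℕ → ℕ) : Prop :=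
  IsPartition n c ∧ Dom a c ∧ Dom b c ∧
    ∀ d, IsPartition n d → Dom a d → Dom b d → Dom c d

def IsInfOf (n : ℕ) (a b c : ℕ → ℕ) : Prop :=
  IsPartition n c ∧ Dom c a ∧ Dom c b ∧
    ∀ d, IsPartition n d → Dom d a → Dom d b → Dom d c

/-!
A partition `a` of `n` is determined by its prefix sums `j ↦ a 0 + ⋯ + a (j - 1)`, which are
nondecreasing, discretely concave, vanish at `0` and equal `n` from `n` on; dominance is the
pointwise order on them. The pointwise infimum of a nonempty family of such functions is again
one: in `ℕ` an infimum is attained, and at the point where it is attained the concavity of the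
minimizing partition bounds the neighbouring values. So every nonempty set of partitions has a
greatest lower bound. The meet of `a` and `b` is that of `{a, b}`, and their join is the meet of
their common upper bounds, a set containing the one-part partition `(n)`.
-/

open Finset

def prefixSum (a : ℕ → ℕ) (j : ℕ) : ℕ := ∑ i ∈ range j, a i

@[simp] lemma prefixSum_zero (a : ℕ → ℕ) : prefixSum a 0 = 0 := sum_range_zero a

lemma prefixSum_succ (a : ℕ → ℕ) (j : ℕ) : prefixSum a (j + 1) = prefixSum a j + a j :=
  sum_range_succ a j

lemma prefixSum_mono (a : ℕ → ℕ) : Monotone (prefixSum a) := fun _ _ h =>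
  sum_le_sum_of_subset (range_subset_range.2 h)

namespace IsPartition

variable {n : ℕ} {a : ℕ → ℕ}

lemma prefixSum_eq_of_le (ha : IsPartition n a) {j : ℕ} (hj : n ≤ j) : prefixSum a j = n := by
  rw [← ha.2.1]
  exact (sum_subset (range_subset_range.2 hj) fun i _ hi => ha.2.2 i (by simpa using hi)).symm

lemma prefixSum_le (ha : IsPartition n a) (j : ℕ) : prefixSum a j ≤ n := by
  rcases le_total j n with h | h
  · exact (prefixSum_mono a h).trans ha.2.1.le
  · exact (ha.prefixSum_eq_of_le h).le

lemma prefixSum_concave (ha : IsPartition n a) (k : ℕ) :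
    prefixSum a (k + 2) + prefixSum a k ≤ 2 * prefixSum a (k + 1) := by
  have := ha.1 k (k + 1) k.le_succ
  rw [prefixSum_succ a (k + 1), prefixSum_succ a k]
  omega

lemma dom_single (ha : IsPartition n a) : Dom a (Pi.single 0 n) := by
  intro j
  change prefixSum a j ≤ ∑ i ∈ range j, Pi.single 0 n i
  rw [sum_pi_single']
  rcases j with _ | j
  · simp
  · simpa using ha.prefixSum_le (j + 1)

end IsPartition

lemma isPartition_single (n : ℕ) : IsPartition n (Pi.single 0 n) := by
  refine ⟨fun i j hij => ?_, ?_, fun i hi => ?_⟩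
  · rcases j with _ | j
    · rw [Nat.le_zero.1 hij]
    · simp
  · rw [sum_pi_single']
    split_ifs <;> simp_all
  · rcases i with _ | i
    · simp [Nat.le_zero.1 hi]
    · simp

theorem exists_isPartition_prefixSum_eq {n : ℕ} {g : ℕ → ℕ} (hg0 : g 0 = 0) (hmono : Monotone g)
    (hconc : ∀ k, g (k + 2) + g k ≤ 2 * g (k + 1)) (hn : ∀ j, n ≤ j → g j = n) :
    ∃ c, IsPartition n c ∧ prefixSum c = g := by
  have hsum : prefixSum (fun i => g (i + 1) - g i) = g := funext fun j => by
    rw [prefixSum, sum_range_tsub hmono, hg0, Nat.sub_zero]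
  have hanti : Antitone fun i => g (i + 1) - g i := antitone_nat_of_succ_le fun k => by
    change g (k + 2) - g (k + 1) ≤ g (k + 1) - g k
    have := hconc k
    have := hmono (by omega : k + 1 ≤ k + 2)
    have := hmono k.le_succ
    omega
  refine ⟨_, ⟨fun i j hij => hanti hij, ?_, fun i hi => ?_⟩, hsum⟩
  · change prefixSum _ n = n
    rw [hsum, hn n le_rfl]
  · simp [hn i hi, hn (i + 1) (by omega)]

theorem exists_isGLB_dom {n : ℕ} {S : Set (ℕ → ℕ)} (hS : ∀ d ∈ S, IsPartition n d)
    (hne : S.Nonempty) :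
    ∃ c, IsPartition n c ∧ (∀ d ∈ S, Dom c d) ∧ ∀ e, (∀ d ∈ S, Dom e d) → Dom e c := by
  set g : ℕ → ℕ := fun j => sInf ((prefixSum · j) '' S)
  have hle : ∀ d ∈ S, ∀ j, g j ≤ prefixSum d j := fun d hd j => Nat.sInf_le ⟨d, hd, rfl⟩
  have hattain : ∀ j, ∃ d ∈ S, prefixSum d j = g j := fun j => Nat.sInf_mem (hne.image _)
  have hge : ∀ e, (∀ d ∈ S, Dom e d) → ∀ j, prefixSum e j ≤ g j := fun e he j =>
    le_csInf (hne.image _) (Set.forall_mem_image.2 fun d hd => he d hd j)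
  obtain ⟨c, hc, hcg⟩ : ∃ c, IsPartition n c ∧ prefixSum c = g := by
    obtain ⟨d₀, hd₀⟩ := hne
    refine exists_isPartition_prefixSum_eq ?_ ?_ ?_ ?_
    · simpa using hle d₀ hd₀ 0
    · intro i j hij
      obtain ⟨d, hd, hdj⟩ := hattain j
      exact (hle d hd i).trans ((prefixSum_mono d hij).trans_eq hdj)
    · intro k
      obtain ⟨d, hd, hdk⟩ := hattain (k + 1)
      have := (hS d hd).prefixSum_concave k
      have := hle d hd k
      have := hle d hd (k + 2)
      omega
    · intro j hj
      obtain ⟨d, hd, hdj⟩ := hattain j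
      rw [← hdj, (hS d hd).prefixSum_eq_of_le hj]
  refine ⟨c, hc, fun d hd j => ?_, fun e he j => ?_⟩
  · change prefixSum c j ≤ prefixSum d j
    exact hcg ▸ hle d hd j
  · change prefixSum e j ≤ prefixSum c j
    exact hcg ▸ hge e he j

theorem stmt1_general (n : ℕ) :
    ∀ a b, IsPartition n a → IsPartition n b →
      (∃ c, IsSupOf n a b c) ∧ (∃ c, IsInfOf n a b c) := by
  intro a b ha hb
  constructor
  · obtain ⟨c, hc, hc_le, hc_max⟩ :=
      exists_isGLB_dom (S := {d | IsPartition n d ∧ Dom a d ∧ Dom b d}) (fun d hd => hd.1)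
        ⟨_, isPartition_single n, ha.dom_single, hb.dom_single⟩
    exact ⟨c, hc, hc_max a fun d hd => hd.2.1, hc_max b fun d hd => hd.2.2,
      fun d hd had hbd => hc_le d ⟨hd, had, hbd⟩⟩
  · obtain ⟨c, hc, hc_le, hc_max⟩ :=
      exists_isGLB_dom (n := n) (S := {a, b}) (by simp [ha, hb]) (Set.insert_nonempty a {b})
    exact ⟨c, hc, hc_le a (by simp), hc_le b (by simp),
      fun d _ hda hdb => hc_max d (by simp [hda, hdb])⟩

/-- The partitions of a positive integer  under dominance form a lattice:
any two partitions have a least upper bound and a greatest lower bound. -/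
theorem stmt1 (n : ℕ) (hn : 0 < n) :
    ∀ a b, IsPartition n a → IsPartition n b →
      (∃ c, IsSupOf n a b c) ∧ (∃ c, IsInfOf n a b c) :=
  stmt1_general n
end

section
/- The image of the dominance lattice of partitions of n under the map α ↦ α↓₁ = (a₁+1,a₂,…,aₙ,0) is a sublattice of the dominance lattice of partitions of n+1 (closed under joins and meets). -/
def downAt (i : ℕ) (a : ℕ → ℕ) : ℕ → ℕ := fun j => if j = i then a j + 1 else a j

/-!
Dominance compares partial sums pointwise, and the partial sums of partitions of `N` are exactly
the monotone concave sequences `F` with `F 0 = 0` that are constant `N` from `N` on; the partition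
is recovered as the sequence of differences. Hence the meet of two partitions has the pointwise
minimum of their partial sums, and the join has partial sums below every concave majorant of
theirs. Since `α ↦ α↓₁` adds `min j 1` to the `j`-th partial sum, which commutes with minima,
meets of images are images. For the join `c` of `a↓₁` and `b↓₁`, `c₀ ≥ a₀ + 1, b₀ + 1`, so
`j ↦ (c₀ - 1) j + 1` is a concave majorant of the partial sums of `a↓₁` and `b↓₁`; at `j = 2` it
gives `c₀ + c₁ ≤ 2 c₀ - 1`, i.e. `c₁ < c₀`, and a partition of `n + 1` with `c₁ < c₀` and at most
`n` parts is some `d↓₁`.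
-/

open Finset

def partialSum (a : ℕ → ℕ) (j : ℕ) : ℕ := ∑ i ∈ range j, a i

def discreteDiff (F : ℕ → ℕ) (k : ℕ) : ℕ := F (k + 1) - F k

def IsConcaveSeq (F : ℕ → ℕ) : Prop := ∀ j, F j + F (j + 2) ≤ 2 * F (j + 1)

lemma dom_iff (a b : ℕ → ℕ) : Dom a b ↔ ∀ j, partialSum a j ≤ partialSum b j := Iff.rfl

lemma partialSum_succ (a : ℕ → ℕ) (j : ℕ) : partialSum a (j + 1) = partialSum a j + a j :=
  sum_range_succ a j

lemma monotone_partialSum (a : ℕ → ℕ) : Monotone (partialSum a) :=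
  monotone_nat_of_le_succ fun j => by rw [partialSum_succ]; omega

lemma isConcaveSeq_partialSum {a : ℕ → ℕ} (ha : Antitone a) : IsConcaveSeq (partialSum a) := by
  intro j
  have := ha (Nat.le_add_right j 1)
  rw [partialSum_succ, partialSum_succ]
  omega

lemma IsConcaveSeq.min {F G : ℕ → ℕ} (hF : IsConcaveSeq F) (hG : IsConcaveSeq G) :
    IsConcaveSeq fun j => min (F j) (G j) := by
  intro j
  have := hF j
  have := hG j
  dsimp only
  omega

lemma partialSum_le_mul_head {a : ℕ → ℕ} (ha : Antitone a) (j : ℕ) :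
    partialSum a j ≤ j * a 0 := by
  calc partialSum a j ≤ ∑ _i ∈ range j, a 0 := sum_le_sum fun i _ => ha i.zero_le
    _ = j * a 0 := by simp

lemma partialSum_downAt_zero (a : ℕ → ℕ) (j : ℕ) :
    partialSum (downAt 0 a) j = partialSum a j + min j 1 := by
  induction j with
  | zero => rfl
  | succ j ih =>
    rw [partialSum_succ, partialSum_succ, ih]
    rcases j with _ | j <;> simp [downAt] <;> omega

lemma partialSum_discreteDiff {F : ℕ → ℕ} (h0 : F 0 = 0) (hF : Monotone F) :
    partialSum (discreteDiff F) = F := by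
  funext j
  induction j with
  | zero => exact h0.symm
  | succ j ih =>
    have := hF (Nat.le_add_right j 1)
    rw [partialSum_succ, ih, discreteDiff]
    omega

lemma antitone_discreteDiff {F : ℕ → ℕ} (hF : Monotone F) (hc : IsConcaveSeq F) :
    Antitone (discreteDiff F) :=
  antitone_nat_of_succ_le fun j => by
    have := hc j
    have := hF (Nat.le_add_right j 1)
    have := hF (Nat.le_add_right (j + 1) 1)
    show F (j + 2) - F (j + 1) ≤ F (j + 1) - F j
    omega

lemma eq_of_dom_of_dom {a b : ℕ → ℕ} (hab : Dom a b) (hba : Dom b a) : a = b := by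
  have h : partialSum a = partialSum b := funext fun j => (hab j).antisymm (hba j)
  funext j
  have := congrFun h (j + 1)
  rw [partialSum_succ, partialSum_succ, congrFun h j] at this
  omega

namespace IsPartition

variable {N : ℕ} {a : ℕ → ℕ}

lemma antitone (h : IsPartition N a) : Antitone a := fun i j => h.1 i j

lemma partialSum_of_le (h : IsPartition N a) {j : ℕ} (hj : N ≤ j) : partialSum a j = N := by
  rw [← h.2.1]
  refine (sum_subset (range_mono hj) fun i hi hiN => h.2.2 i ?_).symm
  simp only [mem_range] at hi hiN
  omega

lemma partialSum_le (h : IsPartition N a) (j : ℕ) : partialSum a j ≤ N :=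
  (monotone_partialSum a (j.le_add_right N)).trans_eq (h.partialSum_of_le (N.le_add_left j))

lemma one_le_head (h : IsPartition N a) (hN : 0 < N) : 1 ≤ a 0 := by
  have := partialSum_le_mul_head h.antitone N
  rw [h.partialSum_of_le le_rfl] at this
  exact Nat.pos_of_ne_zero fun h0 => by simp [h0] at this; omega

lemma apply_eq_zero_of_dom {x : ℕ → ℕ} (h : IsPartition N a) (hx : Dom x a) {j : ℕ}
    (hxj : partialSum x j = N) : a j = 0 := by
  have := hx j
  have := h.partialSum_le (j + 1)
  rw [partialSum_succ] at this
  simp only [partialSum] at *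
  omega

lemma downAt_zero (h : IsPartition N a) : IsPartition (N + 1) (downAt 0 a) := by
  refine ⟨fun i j hij => ?_, ?_, fun i hi => ?_⟩
  · have := h.antitone hij
    have := h.antitone j.zero_le
    rcases i with _ | i <;> rcases j with _ | j <;> simp [downAt] <;> omega
  · change partialSum _ _ = _
    rw [partialSum_downAt_zero, h.partialSum_of_le N.le_succ]
    omega
  · simp only [downAt, show i ≠ 0 by omega, if_false]
    exact h.2.2 i (by omega)

end IsPartition

lemma isPartition_discreteDiff {N : ℕ} {F : ℕ → ℕ} (h0 : F 0 = 0) (hF : Monotone F)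
    (hc : IsConcaveSeq F) (hN : ∀ j, N ≤ j → F j = N) : IsPartition N (discreteDiff F) := by
  refine ⟨fun i j hij => antitone_discreteDiff hF hc hij, ?_, fun i hi => ?_⟩
  · change partialSum _ _ = _
    rw [partialSum_discreteDiff h0 hF, hN N le_rfl]
  · simp only [discreteDiff, hN i hi, hN (i + 1) (by omega), Nat.sub_self]

lemma IsPartition.isPartition_discreteDiff_min {N : ℕ} {c B : ℕ → ℕ} (hc : IsPartition N c)
    (hB : Monotone B) (hBc : IsConcaveSeq B) (hBN : ∀ j, N ≤ j → N ≤ B j) :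
    IsPartition N (discreteDiff fun j => min (partialSum c j) (B j)) :=
  isPartition_discreteDiff (Nat.zero_min _) ((monotone_partialSum c).min hB)
    ((isConcaveSeq_partialSum hc.antitone).min hBc)
    fun j hj => by have := hBN j hj; rw [hc.partialSum_of_le hj]; omega

lemma IsInfOf.eq_of_partialSum_eq_min {N : ℕ} {x y c d : ℕ → ℕ} (hc : IsInfOf N x y c)
    (hd : IsPartition N d) (hmin : ∀ j, partialSum d j = min (partialSum x j) (partialSum y j)) :
    c = d := by
  obtain ⟨-, hcx, hcy, hmax⟩ := hc
  refine eq_of_dom_of_dom (fun j => ?_) (hmax d hd (fun j => ?_) fun j => ?_)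
  all_goals have := hmin j; have := hcx j; have := hcy j; simp only [partialSum] at *; omega

lemma IsSupOf.partialSum_le_of_isConcaveSeq {N : ℕ} {x y c B : ℕ → ℕ} (hc : IsSupOf N x y c)
    (hB : Monotone B) (hBc : IsConcaveSeq B) (hBN : ∀ j, N ≤ j → N ≤ B j)
    (hxB : ∀ j, partialSum x j ≤ B j) (hyB : ∀ j, partialSum y j ≤ B j) (j : ℕ) :
    partialSum c j ≤ B j := by
  obtain ⟨hcN, hxc, hyc, hmin⟩ := hc
  set e := discreteDiff fun j => min (partialSum c j) (B j)
  have hsum : partialSum e = fun j => min (partialSum c j) (B j) :=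
    partialSum_discreteDiff (Nat.zero_min (B 0)) ((monotone_partialSum c).min hB)
  have hxe : Dom x e := (dom_iff x e).2 fun j => by
    rw [hsum]
    exact le_min (hxc j) (hxB j)
  have hye : Dom y e := (dom_iff y e).2 fun j => by
    rw [hsum]
    exact le_min (hyc j) (hyB j)
  have hce := (dom_iff c e).1 (hmin e (hcN.isPartition_discreteDiff_min hB hBc hBN) hxe hye) j
  rw [hsum] at hce
  exact hce.trans (min_le_right _ _)

lemma partialSum_downAt_zero_le {x : ℕ → ℕ} (hx : Antitone x) {k : ℕ} (hk : x 0 ≤ k) (j : ℕ) :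
    partialSum (downAt 0 x) j ≤ k * j + 1 := by
  have := (partialSum_le_mul_head hx j).trans (Nat.mul_le_mul_left j hk)
  rw [partialSum_downAt_zero, mul_comm k]
  omega

lemma IsSupOf.apply_one_lt_apply_zero {n : ℕ} (hn : 0 < n) {a b c : ℕ → ℕ}
    (ha : IsPartition n a) (hb : IsPartition n b)
    (hc : IsSupOf (n + 1) (downAt 0 a) (downAt 0 b) c) : c 1 < c 0 := by
  have hac := (dom_iff _ _).1 hc.2.1 1
  have hbc := (dom_iff _ _).1 hc.2.2.1 1
  simp only [partialSum, sum_range_one, downAt, if_pos] at hac hbc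
  have ha0 := ha.one_le_head hn
  set k := c 0 - 1
  have hk1 : 1 ≤ k := by omega
  have h2 := hc.partialSum_le_of_isConcaveSeq (B := fun j => k * j + 1)
    (fun i j hij => Nat.add_le_add_right (Nat.mul_le_mul_left k hij) 1)
    (fun j => le_of_eq (by ring))
    (fun j hj => hj.trans ((Nat.le_mul_of_pos_left j hk1).trans (k * j).le_succ))
    (partialSum_downAt_zero_le ha.antitone (by omega))
    (partialSum_downAt_zero_le hb.antitone (by omega)) 2
  simp only [partialSum, sum_range_succ, sum_range_zero] at h2
  omega

lemma exists_isPartition_eq_downAt_zero {n : ℕ} {c : ℕ → ℕ} (hc : IsPartition (n + 1) c)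
    (h10 : c 1 < c 0) (hn : c n = 0) : ∃ d, IsPartition n d ∧ c = downAt 0 d := by
  have hn0 : n ≠ 0 := by rintro rfl; omega
  set d := Function.update c 0 (c 0 - 1)
  have hcd : c = downAt 0 d := by
    funext j
    rcases j with _ | j <;> simp [d, downAt]
    omega
  refine ⟨d, ⟨fun i j hij => ?_, ?_, fun i hi => ?_⟩, hcd⟩
  · have := hc.antitone hij
    have := hc.antitone (show 1 ≤ max j 1 from le_max_right j 1)
    rcases i with _ | i <;> rcases j with _ | j <;> simp [d] at * <;> omega
  · have hsum := hc.partialSum_of_le le_rfl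
    rw [partialSum_succ, hn, hcd, partialSum_downAt_zero] at hsum
    change partialSum d n = n
    omega
  · show Function.update c 0 (c 0 - 1) i = 0
    rw [Function.update_of_ne (show i ≠ 0 by omega)]
    rcases hi.eq_or_lt with rfl | hlt
    · exact hn
    · exact hc.2.2 i hlt

/-- The image of the dominance lattice of partitions of  under
 is a sublattice of the dominance lattice of partitions of . -/
theorem stmt5 (n : ℕ) (hn : 0 < n) :
    ∀ a b, IsPartition n a → IsPartition n b →
      (∀ c, IsSupOf (n + 1) (downAt 0 a) (downAt 0 b) c →
        ∃ d, IsPartition n d ∧ c = downAt 0 d) ∧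
      (∀ c, IsInfOf (n + 1) (downAt 0 a) (downAt 0 b) c →
        ∃ d, IsPartition n d ∧ c = downAt 0 d) := by
  intro a b ha hb
  refine ⟨fun c hc => ?_, fun c hc => ?_⟩
  · have hcn : c n = 0 := hc.1.apply_eq_zero_of_dom hc.2.1 (by
      rw [partialSum_downAt_zero, ha.partialSum_of_le le_rfl]; omega)
    exact exists_isPartition_eq_downAt_zero hc.1 (hc.apply_one_lt_apply_zero hn ha hb) hcn
  · have hb' : ∀ j, n ≤ j → n ≤ partialSum b j := fun j hj => (hb.partialSum_of_le hj).ge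
    have hg := ha.isPartition_discreteDiff_min (monotone_partialSum b)
      (isConcaveSeq_partialSum hb.antitone) hb'
    refine ⟨_, hg, hc.eq_of_partialSum_eq_min hg.downAt_zero fun j => ?_⟩
    rw [partialSum_downAt_zero, partialSum_downAt_zero, partialSum_downAt_zero,
      partialSum_discreteDiff (F := fun j => min (partialSum a j) (partialSum b j)) rfl
        ((monotone_partialSum a).min (monotone_partialSum b))]
    dsimp only
    omega
end

section
/- For every n ≥ 7, the dominance lattice of partitions of n contains a sublattice isomorphic to the pentagon N₅, and hence is neither modular nor distributive. -/
/-!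
Partitions with at most four parts are compared through their first four prefix sums. Take
`bot = (n-4,2,1,1)`, `low = (n-4,2,2)`, `high = (n-4,3,1)`, `side = (n-3,1,1,1)`,
`top = (n-3,2,1)`. The meets `high ∧ side`, `low ∧ side` and the join `high ∨ side` have as
prefix sums the pointwise minimum, resp. maximum, of those of the two arguments. The pointwise
maximum `(n-3, n-2, n, n)` for `low ∨ side` is not concave, but prefix sums of a partition are, so
every upper bound of `low` and `side` has second prefix sum at least `n - 1`, and
`low ∨ side = top` as well. The pentagon `bot < low < high < top`, `bot < side < top` then breaks
the modular law at `(low, side, high)` and the distributive law at `(high, low, side)`.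
-/

open Finset

section Lattice

variable {n : ℕ} {a b c d : ℕ → ℕ}

theorem IsPartition.antitone_s6 (h : IsPartition n a) : Antitone a := h.1

theorem Antitone.sum_range_add_sum_range_add_two_le (ha : Antitone a) (j : ℕ) :
    ∑ i ∈ range j, a i + ∑ i ∈ range (j + 2), a i ≤ 2 * ∑ i ∈ range (j + 1), a i := by
  have : a (j + 1) ≤ a j := ha (Nat.le_add_right j 1)
  simp only [sum_range_succ]
  omega

theorem IsInfOf.symm (h : IsInfOf n a b c) : IsInfOf n b a c :=
  ⟨h.1, h.2.2.1, h.2.1, fun d hd hda hdb => h.2.2.2 d hd hdb hda⟩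

theorem isInfOf_of_dom (hb : IsPartition n b) (h : Dom b a) : IsInfOf n a b b :=
  ⟨hb, h, fun _ => le_rfl, fun _ _ _ hdb => hdb⟩

theorem isSupOf_of_dom (ha : IsPartition n a) (h : Dom b a) : IsSupOf n a b a :=
  ⟨ha, fun _ => le_rfl, h, fun _ _ had _ => had⟩

theorem isInfOf_of_sum_range_eq_min (hc : IsPartition n c)
    (h : ∀ j, ∑ i ∈ range j, c i = min (∑ i ∈ range j, a i) (∑ i ∈ range j, b i)) :
    IsInfOf n a b c :=
  ⟨hc, fun j => (h j).trans_le (min_le_left _ _), fun j => (h j).trans_le (min_le_right _ _),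
    fun _ _ hda hdb j => (le_min (hda j) (hdb j)).trans (h j).ge⟩

theorem isSupOf_of_sum_range_eq_max (hc : IsPartition n c)
    (h : ∀ j, ∑ i ∈ range j, c i = max (∑ i ∈ range j, a i) (∑ i ∈ range j, b i)) :
    IsSupOf n a b c :=
  ⟨hc, fun j => (le_max_left _ _).trans (h j).ge, fun j => (le_max_right _ _).trans (h j).ge,
    fun _ _ had hbd j => (h j).trans_le (max_le (had j) (hbd j))⟩

end Lattice

def IsPentagon (n : ℕ) (z w u v o : ℕ → ℕ) : Prop :=
  IsPartition n z ∧ IsPartition n w ∧ IsPartition n u ∧ IsPartition n v ∧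
    IsPartition n o ∧ Dom z w ∧ z ≠ w ∧ Dom w u ∧ w ≠ u ∧ Dom u o ∧ u ≠ o ∧
    Dom z v ∧ z ≠ v ∧ Dom v o ∧ v ≠ o ∧
    ¬ Dom v u ∧ ¬ Dom u v ∧ ¬ Dom v w ∧ ¬ Dom w v ∧
    IsInfOf n u v z ∧ IsSupOf n u v o ∧ IsInfOf n w v z ∧ IsSupOf n w v o

def IsModular (n : ℕ) : Prop :=
  ∀ x y m i s s' i', IsPartition n x → IsPartition n y → IsPartition n m →
    Dom x m → IsInfOf n y m i → IsSupOf n x i s → IsSupOf n x y s' →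
    IsInfOf n s' m i' → s = i'

def IsDistributive (n : ℕ) : Prop :=
  ∀ x y z s i i₁ i₂ s', IsPartition n x → IsPartition n y → IsPartition n z →
    IsSupOf n y z s → IsInfOf n x s i → IsInfOf n x y i₁ → IsInfOf n x z i₂ →
    IsSupOf n i₁ i₂ s' → i = s'

namespace IsPentagon

variable {n : ℕ} {z w u v o : ℕ → ℕ}

theorem not_isModular (h : IsPentagon n z w u v o) : ¬ IsModular n := by
  obtain ⟨-, hw, hu, hv, -, hzw, -, hwu, hne, huo, -, -, -, -, -, -, -, -, -,
    huv, -, -, hwv⟩ := h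
  intro hmod
  exact hne (hmod w v u z w o u hw hv hu hwu huv.symm (isSupOf_of_dom hw hzw) hwv
    (isInfOf_of_dom hu huo))

theorem not_isDistributive (h : IsPentagon n z w u v o) : ¬ IsDistributive n := by
  obtain ⟨-, hw, hu, hv, -, hzw, -, hwu, hne, huo, -, -, -, -, -, -, -, -, -,
    huv, -, -, hwv⟩ := h
  intro hdist
  exact hne (hdist u w v o u w z w hu hw hv hwv (isInfOf_of_dom hu huo).symm
    (isInfOf_of_dom hw hwu) huv (isSupOf_of_dom hw hzw)).symm

end IsPentagon

def fourParts (a b c d : ℕ) : ℕ → ℕ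
  | 0 => a
  | 1 => b
  | 2 => c
  | 3 => d
  | _ + 4 => 0

section FourParts

variable {n a b c d a' b' c' d' : ℕ}

theorem sum_range_fourParts (j : ℕ) :
    ∑ i ∈ range j, fourParts a b c d i =
      if j = 0 then 0 else if j = 1 then a else if j = 2 then a + b
      else if j = 3 then a + b + c else a + b + c + d := by
  obtain _ | _ | _ | _ | j := j
  all_goals simp [sum_range_succ', fourParts] <;> omega

theorem fourParts_inj :
    fourParts a b c d = fourParts a' b' c' d' ↔ a = a' ∧ b = b' ∧ c = c' ∧ d = d' := by
  refine ⟨fun h => ⟨congrFun h 0, congrFun h 1, congrFun h 2, congrFun h 3⟩, ?_⟩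
  rintro ⟨rfl, rfl, rfl, rfl⟩
  rfl

theorem dom_fourParts_iff :
    Dom (fourParts a b c d) (fourParts a' b' c' d') ↔
      a ≤ a' ∧ a + b ≤ a' + b' ∧ a + b + c ≤ a' + b' + c' ∧
        a + b + c + d ≤ a' + b' + c' + d' := by
  refine ⟨fun h => ?_, fun h j => ?_⟩
  · have h1 := h 1; have h2 := h 2; have h3 := h 3; have h4 := h 4
    simp only [sum_range_fourParts] at h1 h2 h3 h4
    simp_all
  · simp only [sum_range_fourParts]
    split_ifs <;> omega

theorem isPartition_fourParts (hab : b ≤ a) (hbc : c ≤ b) (hcd : d ≤ c)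
    (hsum : a + b + c + d = n) : IsPartition n (fourParts a b c d) := by
  refine ⟨antitone_nat_of_succ_le fun i => ?_, ?_, fun i hi => ?_⟩
  · obtain _ | _ | _ | _ | i := i <;> simp [fourParts, *]
  · rw [sum_range_fourParts]
    split_ifs <;> omega
  · obtain _ | _ | _ | _ | i := i <;> simp [fourParts] <;> omega

end FourParts

namespace DominancePentagon

variable {n : ℕ}

def bot (n : ℕ) : ℕ → ℕ := fourParts (n - 4) 2 1 1
def low (n : ℕ) : ℕ → ℕ := fourParts (n - 4) 2 2 0
def high (n : ℕ) : ℕ → ℕ := fourParts (n - 4) 3 1 0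
def side (n : ℕ) : ℕ → ℕ := fourParts (n - 3) 1 1 1
def top (n : ℕ) : ℕ → ℕ := fourParts (n - 3) 2 1 0

variable (hn : 7 ≤ n)
include hn

theorem isPartition_bot : IsPartition n (bot n) :=
  isPartition_fourParts (by omega) (by omega) (by omega) (by omega)
theorem isPartition_low : IsPartition n (low n) :=
  isPartition_fourParts (by omega) (by omega) (by omega) (by omega)
theorem isPartition_high : IsPartition n (high n) :=
  isPartition_fourParts (by omega) (by omega) (by omega) (by omega)
theorem isPartition_side : IsPartition n (side n) :=
  isPartition_fourParts (by omega) (by omega) (by omega) (by omega)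
theorem isPartition_top : IsPartition n (top n) :=
  isPartition_fourParts (by omega) (by omega) (by omega) (by omega)

theorem isInfOf_high_side : IsInfOf n (high n) (side n) (bot n) :=
  isInfOf_of_sum_range_eq_min (isPartition_bot hn) fun j => by
    simp only [bot, high, side, sum_range_fourParts]
    split_ifs <;> omega

theorem isInfOf_low_side : IsInfOf n (low n) (side n) (bot n) :=
  isInfOf_of_sum_range_eq_min (isPartition_bot hn) fun j => by
    simp only [bot, low, side, sum_range_fourParts]
    split_ifs <;> omega

theorem isSupOf_high_side : IsSupOf n (high n) (side n) (top n) :=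
  isSupOf_of_sum_range_eq_max (isPartition_top hn) fun j => by
    simp only [top, high, side, sum_range_fourParts]
    split_ifs <;> omega

theorem isSupOf_low_side : IsSupOf n (low n) (side n) (top n) := by
  refine ⟨isPartition_top hn, dom_fourParts_iff.2 (by omega), dom_fourParts_iff.2 (by omega),
    fun d hd hlow hside j => ?_⟩
  by_cases hj : j = 2
  · subst hj
    have hconcave := hd.antitone_s6.sum_range_add_sum_range_add_two_le 1
    have hside_1 := hside 1
    have hlow_3 := hlow 3
    simp only [top, low, side, sum_range_fourParts] at hside_1 hlow_3 ⊢
    norm_num at hside_1 hlow_3 hconcave ⊢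
    omega
  · have hlow_j := hlow j
    have hside_j := hside j
    simp only [top, low, side, sum_range_fourParts] at hlow_j hside_j ⊢
    split_ifs at hlow_j hside_j ⊢ <;> omega

theorem isPentagon : IsPentagon n (bot n) (low n) (high n) (side n) (top n) := by
  refine ⟨isPartition_bot hn, isPartition_low hn, isPartition_high hn, isPartition_side hn,
    isPartition_top hn, ?_, ?_, ?_, ?_, ?_, ?_, ?_, ?_, ?_, ?_, ?_, ?_, ?_, ?_,
    isInfOf_high_side hn, isSupOf_high_side hn, isInfOf_low_side hn, isSupOf_low_side hn⟩
  all_goals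
    simp only [bot, low, high, side, top, Ne, dom_fourParts_iff, fourParts_inj]
    omega

end DominancePentagon

open DominancePentagon in
/-- For n ≥ 7 the dominance lattice of partitions of n contains a sublattice
isomorphic to the pentagon N₅, hence is neither modular nor distributive. -/
theorem stmt6 (n : ℕ) (hn : 7 ≤ n) :
    (∃ z w u v o : ℕ → ℕ,
      IsPartition n z ∧ IsPartition n w ∧ IsPartition n u ∧ IsPartition n v ∧
        IsPartition n o ∧
      Dom z w ∧ z ≠ w ∧ Dom w u ∧ w ≠ u ∧ Dom u o ∧ u ≠ o ∧
      Dom z v ∧ z ≠ v ∧ Dom v o ∧ v ≠ o ∧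
      ¬ Dom v u ∧ ¬ Dom u v ∧ ¬ Dom v w ∧ ¬ Dom w v ∧
      IsInfOf n u v z ∧ IsSupOf n u v o ∧ IsInfOf n w v z ∧ IsSupOf n w v o) ∧
    -- non-modularity: the modular law fails
    (¬ ∀ x y m i s s' i', IsPartition n x → IsPartition n y → IsPartition n m →
        Dom x m → IsInfOf n y m i → IsSupOf n x i s → IsSupOf n x y s' →
        IsInfOf n s' m i' → s = i') ∧
    -- non-distributivity: the distributive law fails
    (¬ ∀ x y z s i i₁ i₂ s', IsPartition n x → IsPartition n y → IsPartition n z →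
        IsSupOf n y z s → IsInfOf n x s i → IsInfOf n x y i₁ → IsInfOf n x z i₂ →
        IsSupOf n i₁ i₂ s' → i = s') :=
  ⟨⟨_, _, _, _, _, isPentagon hn⟩, (isPentagon hn).not_isModular,
    (isPentagon hn).not_isDistributive⟩
end

section
/- In the dominance lattice of partitions of n, the partition α covers β if and only if either (1) there is j with α_j = β_j + 1, α_{j+1} = β_{j+1} − 1 and α_i = β_i for all other i, or (2) there are j < k with α_j = β_j + 1, α_k = β_k − 1, β_j = β_k, and α_i = β_i for all other i. -/
/-- α covers β in the dominance order (β < α with nothing strictly between). -/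
def CoversD (n : ℕ) (a b : ℕ → ℕ) : Prop :=
  Dom b a ∧ a ≠ b ∧
    ¬ ∃ c, IsPartition n c ∧ Dom b c ∧ b ≠ c ∧ Dom c a ∧ c ≠ a

/-!
Write `psum b m` for the prefix sums of `b`, so that dominance `b ≤ a` says `psum b ≤ psum a`
pointwise, and `move b j k` (`j < k`) for `b` with one box moved from row `k` up to row `j`; its
prefix sums exceed those of `b` by one exactly on `(j, k]`.

If `a` covers `b`, let `j` be the first row where they differ and `(j, r]` the maximal window on
which `psum b < psum a`. Any move inside `[j, r]` that yields a partition lies strictly above `b`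
and below `a`, hence equals `a`; thus `a = move b j r`, and if `j + 1 < r` and `b r < b j`, a
second such move exists, contradicting uniqueness. Conversely, if `c` lies between `b` and
`move b j k`, then `psum c - psum b ∈ {0, 1}` vanishes outside `(j, k]`; when `b` is constant on
`[j, k]`, monotonicity of `c` forces this difference to be constant on the window, so `c` is `b`
or `move b j k`.
-/

namespace Dominance

def psum (f : ℕ → ℕ) (m : ℕ) : ℕ := ∑ i ∈ Finset.range m, f i

@[simp] lemma psum_zero (f : ℕ → ℕ) : psum f 0 = 0 := rfl

lemma psum_succ (f : ℕ → ℕ) (m : ℕ) : psum f (m + 1) = psum f m + f m :=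
  Finset.sum_range_succ f m

lemma eq_of_psum_eq {f g : ℕ → ℕ} (h : ∀ m, psum f m = psum g m) : f = g := by
  funext m
  have := h (m + 1)
  rw [psum_succ, psum_succ, h m] at this
  omega

lemma _root_.Dom.psum_le {a b : ℕ → ℕ} (h : Dom a b) (m : ℕ) : psum a m ≤ psum b m := h m

lemma _root_.IsPartition.antitone_s8 {n : ℕ} {a : ℕ → ℕ} (h : IsPartition n a) : Antitone a :=
  fun i j hij => h.1 i j hij

lemma _root_.IsPartition.lt_of_pos {n k : ℕ} {a : ℕ → ℕ} (h : IsPartition n a) (hk : 0 < a k) :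
    k < n := by
  by_contra hkn
  have := h.2.2 k (by omega)
  omega

lemma _root_.IsPartition.psum_of_le {n m : ℕ} {a : ℕ → ℕ} (h : IsPartition n a) (hm : n ≤ m) :
    psum a m = n := by
  induction m, hm using Nat.le_induction with
  | base => exact h.2.1
  | succ m hm ih => rw [psum_succ, ih, h.2.2 m hm, add_zero]

def move (b : ℕ → ℕ) (j k i : ℕ) : ℕ :=
  if i = j then b i + 1 else if i = k then b i - 1 else b i

variable {b : ℕ → ℕ} {j k : ℕ}

lemma psum_move (hjk : j < k) (hk : 0 < b k) (m : ℕ) :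
    psum (move b j k) m = psum b m + if j < m ∧ m ≤ k then 1 else 0 := by
  induction m with
  | zero => simp
  | succ m ih =>
    rw [psum_succ, psum_succ, ih]
    simp only [move]
    split_ifs <;> subst_vars <;> omega

lemma dom_move (hjk : j < k) (hk : 0 < b k) : Dom b (move b j k) := fun m => by
  show psum b m ≤ psum (move b j k) m
  rw [psum_move hjk hk]
  exact Nat.le_add_right _ _

lemma move_ne (b : ℕ → ℕ) (j k : ℕ) : move b j k ≠ b := fun h => by
  have := congrFun h j
  simp [move] at this

lemma move_injective {j' k' : ℕ} (hjk : j ≠ k) (hj'k' : j' ≠ k') (hk : 0 < b k)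
    (h : move b j k = move b j' k') : j = j' ∧ k = k' := by
  have hj := congrFun h j
  have hk' := congrFun h k
  simp only [move] at hj hk'
  split_ifs at hj hk' <;> omega

lemma _root_.IsPartition.move {n : ℕ} (hb : IsPartition n b) (hjk : j < k)
    (hj : ∀ i < j, b j < b i) (hk : b (k + 1) < b k) : IsPartition n (move b j k) := by
  have hk0 : 0 < b k := by omega
  have hkn : k < n := hb.lt_of_pos hk0
  refine ⟨fun i₁ i₂ h => ?_, ?_, fun i hi => ?_⟩
  · have h12 := hb.antitone_s8 h
    have hleft : i₁ < i₂ → i₂ = j → b i₂ < b i₁ := by rintro h rfl; exact hj _ h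
    have hright : i₁ < i₂ → i₁ = k → b i₂ < b i₁ := by
      rintro h rfl; exact (hb.antitone_s8 (Nat.succ_le_of_lt h)).trans_lt hk
    simp only [Dominance.move]
    split_ifs <;> omega
  · have := psum_move hjk hk0 n
    rw [if_neg (by omega), add_zero] at this
    exact this.trans hb.2.1
  · have := hb.2.2 i hi
    simp only [Dominance.move]
    split_ifs <;> omega

section Between

variable {c : ℕ → ℕ}

lemma psum_eq_of_const_Ico (hc : Antitone c) (hbc : Dom b c)
    (hconst : ∀ m, j ≤ m → m < k → b m = b j) (hj : psum c j = psum b j)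
    (hj1 : psum c (j + 1) = psum b (j + 1)) {m : ℕ} (h1 : j < m) (h2 : m ≤ k) :
    psum c m = psum b m := by
  have hcj : c j = b j := by
    rw [psum_succ, psum_succ, hj] at hj1
    omega
  induction m, h1 using Nat.le_induction with
  | base => exact hj1
  | succ m hm ih =>
    refine le_antisymm ?_ (hbc.psum_le _)
    calc psum c (m + 1) = psum b m + c m := by rw [psum_succ, ih (by omega)]
      _ ≤ psum b m + c j := by gcongr; exact hc (by omega)
      _ = psum b (m + 1) := by rw [psum_succ, hcj, hconst m (by omega) (by omega)]

lemma psum_eq_add_one_of_const_Ioc (hc : Antitone c) (hbc : Dom b c)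
    (hconst : ∀ m, j < m → m ≤ k → b m = b k) (hle : ∀ m, psum c m ≤ psum b m + 1)
    (hj1 : psum c (j + 1) = psum b (j + 1) + 1) {m : ℕ} (h1 : j < m) (h2 : m ≤ k) :
    psum c m = psum b m + 1 := by
  induction m, h1 using Nat.le_induction with
  | base => exact hj1
  | succ m hm ih =>
    have hm1 := ih (by omega)
    refine le_antisymm (hle _) (not_lt.mp fun hlt => ?_)
    have hfall : psum c (m + 1) = psum b (m + 1) := le_antisymm (by omega) (hbc.psum_le _)
    have hcm : c m + 1 = b m := by
      rw [psum_succ, psum_succ, hm1] at hfall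
      omega
    have := hbc.psum_le (m + 1 + 1)
    rw [psum_succ, psum_succ c, hfall] at this
    have := hc (show m ≤ m + 1 by omega)
    have := hconst m (by omega) (by omega)
    have := hconst (m + 1) (by omega) h2
    omega

lemma eq_or_eq_move_of_dom (hb : Antitone b) (hjk : j < k) (hk : 0 < b k)
    (hflat : k = j + 1 ∨ b j = b k) (hc : Antitone c) (hbc : Dom b c)
    (hca : Dom c (move b j k)) : c = b ∨ c = move b j k := by
  have hhi (m : ℕ) : psum c m ≤ psum b m + if j < m ∧ m ≤ k then 1 else 0 :=
    (hca.psum_le m).trans_eq (psum_move hjk hk m)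
  have hle (m : ℕ) : psum c m ≤ psum b m + 1 := by
    have := hhi m
    split_ifs at this <;> omega
  have hout (m : ℕ) (hm : ¬ (j < m ∧ m ≤ k)) : psum c m = psum b m := by
    have := hhi m
    rw [if_neg hm, add_zero] at this
    exact le_antisymm this (hbc.psum_le m)
  have hconst_Ico (m : ℕ) (h1 : j ≤ m) (h2 : m < k) : b m = b j := by
    obtain rfl | h := hflat
    · congr 1
      omega
    · exact le_antisymm (hb h1) (h ▸ hb h2.le)
  have hconst_Ioc (m : ℕ) (h1 : j < m) (h2 : m ≤ k) : b m = b k := by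
    obtain rfl | h := hflat
    · congr 1
      omega
    · exact le_antisymm (h ▸ hb h1.le) (hb h2)
  obtain h0 | h1 : psum c (j + 1) = psum b (j + 1) ∨ psum c (j + 1) = psum b (j + 1) + 1 := by
    have := hbc.psum_le (j + 1)
    have := hle (j + 1)
    omega
  · refine .inl (eq_of_psum_eq fun m => ?_)
    by_cases hm : j < m ∧ m ≤ k
    · exact psum_eq_of_const_Ico hc hbc hconst_Ico (hout j (by omega)) h0 hm.1 hm.2
    · exact hout m hm
  · refine .inr (eq_of_psum_eq fun m => ?_)
    rw [psum_move hjk hk]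
    by_cases hm : j < m ∧ m ≤ k
    · rw [if_pos hm]
      exact psum_eq_add_one_of_const_Ioc hc hbc hconst_Ioc hle h1 hm.1 hm.2
    · rw [if_neg hm, add_zero]
      exact hout m hm

end Between

theorem coversD_move {n : ℕ} (hb : Antitone b) (hjk : j < k) (hk : 0 < b k)
    (hflat : k = j + 1 ∨ b j = b k) : CoversD n (move b j k) b := by
  refine ⟨dom_move hjk hk, move_ne b j k, ?_⟩
  rintro ⟨c, hc, hbc, hne_b, hca, hne_a⟩
  rcases eq_or_eq_move_of_dom hb hjk hk hflat hc.antitone_s8 hbc hca with rfl | rfl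
  exacts [hne_b rfl, hne_a rfl]

lemma exists_window {n : ℕ} {a : ℕ → ℕ} (ha : IsPartition n a) (hb : IsPartition n b)
    (hba : Dom b a) (hne : a ≠ b) :
    ∃ j r, j < r ∧ (∀ i < j, b j < b i) ∧ b (r + 1) < b r ∧
      ∀ m, j < m → m ≤ r → psum b m < psum a m := by
  have hdiff : ∃ i, a i ≠ b i := Function.ne_iff.mp hne
  set j := Nat.find hdiff
  have hpre (i : ℕ) (hi : i < j) : a i = b i := not_not.mp (Nat.find_min hdiff hi)
  have hsj : psum a j = psum b j :=
    Finset.sum_congr rfl fun i hi => hpre i (Finset.mem_range.mp hi)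
  have hbja : b j < a j := by
    have := hba.psum_le (j + 1)
    rw [psum_succ, psum_succ, hsj] at this
    exact lt_of_le_of_ne (by omega) (Ne.symm (Nat.find_spec hdiff))
  have hjn : j < n := ha.lt_of_pos (by omega)
  have hend : ∃ m, j < m ∧ psum a m ≤ psum b m :=
    ⟨n + 1, by omega, (ha.psum_of_le (by omega)).trans_le (hb.psum_of_le (by omega)).ge⟩
  obtain ⟨r, hr⟩ : ∃ r, Nat.find hend = r + 1 :=
    Nat.exists_eq_succ_of_ne_zero (by have := (Nat.find_spec hend).1; omega)
  have hwin (m : ℕ) (h1 : j < m) (h2 : m ≤ r) : psum b m < psum a m :=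
    not_le.mp fun h => Nat.find_min hend (show m < Nat.find hend by omega) ⟨h1, h⟩
  have hr_spec := Nat.find_spec hend
  rw [hr] at hr_spec
  have hjr : j < r := by
    refine lt_of_le_of_ne (by omega) fun hjr => ?_
    rw [← hjr, psum_succ, psum_succ, hsj] at hr_spec
    omega
  refine ⟨j, r, hjr, fun i hi => ?_, ?_, hwin⟩
  · rw [← hpre i hi]
    exact hbja.trans_le (ha.antitone_s8 hi.le)
  · have := hwin r (by omega) le_rfl
    have := hba.psum_le (r + 1)
    have := hba.psum_le (r + 1 + 1)
    have := psum_succ a r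
    have := psum_succ b r
    have := psum_succ a (r + 1)
    have := psum_succ b (r + 1)
    have := ha.antitone_s8 (show r ≤ r + 1 by omega)
    omega

lemma eq_move_of_coversD {n r j' k' : ℕ} {a : ℕ → ℕ} (hcov : CoversD n a b)
    (hb : IsPartition n b) (hwin : ∀ m, j < m → m ≤ r → psum b m < psum a m)
    (hjj' : j ≤ j') (hjk : j' < k') (hkr : k' ≤ r) (hj' : ∀ i < j', b j' < b i)
    (hk' : b (k' + 1) < b k') : move b j' k' = a := by
  by_contra hne
  have hk0 : 0 < b k' := by omega
  refine hcov.2.2 ⟨move b j' k', hb.move hjk hj' hk', dom_move hjk hk0,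
    (move_ne b j' k').symm, fun m => ?_, hne⟩
  show psum (move b j' k') m ≤ psum a m
  rw [psum_move hjk hk0]
  split_ifs with hm
  · exact hwin m (by omega) (by omega)
  · exact hcov.1.psum_le m

lemma exists_other_move {r : ℕ} (hb : Antitone b) (hjr : j + 1 < r) (hlt : b r < b j)
    (hj : ∀ i < j, b j < b i) (hr : b (r + 1) < b r) :
    ∃ j' k', j ≤ j' ∧ j' < k' ∧ k' ≤ r ∧ (j' ≠ j ∨ k' ≠ r) ∧
      (∀ i < j', b j' < b i) ∧ b (k' + 1) < b k' := by
  -- with `s` the first row of length `b r`: move a box from `r` up to `s`, or, if `s = r`,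
  -- from `r - 1` up to `j`
  have hex : ∃ s, b s ≤ b r := ⟨r, le_rfl⟩
  set s := Nat.find hex
  have hs : b s ≤ b r := Nat.find_spec hex
  have hmin (i : ℕ) (hi : i < s) : b r < b i := not_le.mp (Nat.find_min hex hi)
  have hsr : s ≤ r := Nat.find_min' hex le_rfl
  have hjs : j < s := not_le.mp fun h => by have := hb h; omega
  rcases hsr.lt_or_eq with hsr | hsr
  · exact ⟨s, r, hjs.le, hsr, le_rfl, Or.inl hjs.ne', fun i hi => hs.trans_lt (hmin i hi), hr⟩
  · refine ⟨j, r - 1, le_rfl, by omega, by omega, Or.inr (by omega), hj, ?_⟩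
    rw [Nat.sub_add_cancel (by omega)]
    exact hmin (r - 1) (by omega)

theorem coversD_iff {n : ℕ} {a : ℕ → ℕ} (ha : IsPartition n a) (hb : IsPartition n b) :
    CoversD n a b ↔ ∃ j k, j < k ∧ 0 < b k ∧ (k = j + 1 ∨ b j = b k) ∧ a = move b j k := by
  refine ⟨fun hcov => ?_, ?_⟩
  · obtain ⟨j, r, hjr, hj, hr, hwin⟩ := exists_window ha hb hcov.1 hcov.2.1
    have hmove := eq_move_of_coversD hcov hb hwin le_rfl hjr le_rfl hj hr
    refine ⟨j, r, hjr, by omega, or_iff_not_imp_left.mpr fun hjr' => ?_, hmove.symm⟩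
    refine le_antisymm (not_lt.mp fun hlt => ?_) (hb.antitone_s8 hjr.le)
    obtain ⟨j', k', hjj', hjk', hkr, hne, hj', hk'⟩ :=
      exists_other_move hb.antitone_s8 (by omega) hlt hj hr
    have := move_injective hjr.ne hjk'.ne (by omega)
      (hmove.trans (eq_move_of_coversD hcov hb hwin hjj' hjk' hkr hj' hk').symm)
    omega
  · rintro ⟨j, k, hjk, hk, hflat, rfl⟩
    exact coversD_move hb.antitone_s8 hjk hk hflat

lemma eq_move_and_pos_iff {a : ℕ → ℕ} (hjk : j ≠ k) :
    a = move b j k ∧ 0 < b k ↔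
      a j = b j + 1 ∧ b k = a k + 1 ∧ ∀ i, i ≠ j → i ≠ k → a i = b i := by
  constructor
  · rintro ⟨rfl, hk⟩
    refine ⟨?_, ?_, fun i hij hik => ?_⟩ <;> simp only [move] <;> split_ifs <;> omega
  · rintro ⟨hj, hk, hi⟩
    refine ⟨funext fun i => ?_, by omega⟩
    simp only [move]
    split_ifs with h1 h2
    · rw [h1, hj]
    · rw [h2, hk]; rfl
    · exact hi i h1 h2

end Dominance

/-- Indices are 0-based. -/
theorem stmt8_general (n : ℕ) :
    ∀ a b, IsPartition n a → IsPartition n b →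
      (CoversD n a b ↔
        (∃ j, j + 1 < n ∧ a j = b j + 1 ∧ b (j + 1) = a (j + 1) + 1 ∧
          ∀ i, i ≠ j → i ≠ j + 1 → a i = b i) ∨
        (∃ j k, j < k ∧ k < n ∧ a j = b j + 1 ∧ b k = a k + 1 ∧ b j = b k ∧
          ∀ i, i ≠ j → i ≠ k → a i = b i)) := by
  intro a b ha hb
  rw [Dominance.coversD_iff ha hb]
  constructor
  · rintro ⟨j, k, hjk, hk, hflat, hab⟩
    obtain ⟨haj, hbk, hrest⟩ := (Dominance.eq_move_and_pos_iff hjk.ne).mp ⟨hab, hk⟩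
    have hkn := hb.lt_of_pos hk
    rcases hflat with rfl | hflat
    · exact Or.inl ⟨j, hkn, haj, hbk, hrest⟩
    · exact Or.inr ⟨j, k, hjk, hkn, haj, hbk, hflat, hrest⟩
  · rintro (⟨j, -, haj, hbk, hrest⟩ | ⟨j, k, hjk, -, haj, hbk, hflat, hrest⟩)
    · obtain ⟨hab, hk⟩ := (Dominance.eq_move_and_pos_iff (by omega)).mpr ⟨haj, hbk, hrest⟩
      exact ⟨j, j + 1, by omega, hk, Or.inl rfl, hab⟩
    · obtain ⟨hab, hk⟩ := (Dominance.eq_move_and_pos_iff hjk.ne).mpr ⟨haj, hbk, hrest⟩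
      exact ⟨j, k, hjk, hk, Or.inr hflat, hab⟩

/-- Brylawski's characterization of the covering relation in the dominance
lattice (indices written 0-based). -/
theorem stmt8 (n : ℕ) (hn : 0 < n) :
    ∀ a b, IsPartition n a → IsPartition n b →
      (CoversD n a b ↔
        (∃ j, j + 1 < n ∧ a j = b j + 1 ∧ b (j + 1) = a (j + 1) + 1 ∧
          ∀ i, i ≠ j → i ≠ j + 1 → a i = b i) ∨
        (∃ j k, j < k ∧ k < n ∧ a j = b j + 1 ∧ b k = a k + 1 ∧ b j = b k ∧
          ∀ i, i ≠ j → i ≠ k → a i = b i)) :=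
  stmt8_general n
end
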